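/- arXiv:1605.04690 — 2 statements merged into one kernel-verified Lean document; each statement's English description precedes it below -/
import Mathlib

section
/- Let a and m be positive integers and let G be a simple graph with two distinct nonadjacent vertices u and u′. Suppose that for every finite colour set Z with |Z| = a and every pair A, B of disjoint m-element subsets of Z, there exists a list assignment L of G with L(u) = A, L(u′) = B, and |L(s)| = a for every vertex s ∉ {u, u′}, such that G admits no m-fold L-colouring. Fix a colour set Z with |Z| = a and let H be the graph obtained from the disjoint union of one copy of G for each ordered pair (A, B) of disjoint m-element subsets of Z, by identifying all copies of u into a single vertex u, identifying all copies of u′ into a single vertex u′, and adding an edge joining u and u′. Then H is not (a, m)-choosable. -/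
/-- An `m`-fold `L`-colouring of a graph `G`: a map `φ` assigning to each vertex `v` a set
`φ(v) ⊆ L(v)` with `|φ(v)| = m`, such that `φ(v) ∩ φ(v′) = ∅` whenever `v, v′` are
adjacent. -/
def IsMFoldColouring {V : Type*} {α : Type*} (G : SimpleGraph V) (L : V → Finset α)
    (m : ℕ) (φ : V → Finset α) : Prop :=
  (∀ v, φ v ⊆ L v) ∧ (∀ v, (φ v).card = m) ∧
    ∀ ⦃v v'⦄, G.Adj v v' → Disjoint (φ v) (φ v')

/-- The index set: ordered pairs `(A, B)` of disjoint `m`-element subsets of `Z`. -/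
def PairIdx {α : Type*} (Z : Finset α) (m : ℕ) : Type _ :=
  {p : Finset α × Finset α //
    p.1 ⊆ Z ∧ p.2 ⊆ Z ∧ p.1.card = m ∧ p.2.card = m ∧ Disjoint p.1 p.2}

/-- The vertex set of the graph `H`: the two identified vertices `u` (as `Sum.inl 0`)
and `u′` (as `Sum.inl 1`), together with one copy of every vertex of `G` other than
`u, u′` for each index in `ι`. -/
def GlueVert (V : Type*) (u u' : V) (ι : Type*) : Type _ :=
  Fin 2 ⊕ (ι × {s : V // s ≠ u ∧ s ≠ u'})

/-- The embedding of the `i`-th copy of `G` into the vertex set of `H`: all copies of `u`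
are identified to `Sum.inl 0`, all copies of `u′` are identified to `Sum.inl 1`. -/
def glueEmb {V : Type*} [DecidableEq V] (u u' : V) {ι : Type*} (i : ι) (s : V) :
    GlueVert V u u' ι :=
  if h : s = u then Sum.inl 0
  else if h' : s = u' then Sum.inl 1
  else Sum.inr (i, ⟨s, h, h'⟩)

/-- The graph `H` obtained from the disjoint union of one copy of `G` for each index in
`ι`, by identifying all copies of `u` into a single vertex, identifying all copies of
`u′` into a single vertex, and adding an edge joining `u` and `u′`. -/
def glueGraph {V : Type*} [DecidableEq V] (G : SimpleGraph V) (u u' : V) (ι : Type*) :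
    SimpleGraph (GlueVert V u u' ι) :=
  SimpleGraph.fromRel (fun p q =>
    (p = Sum.inl 0 ∧ q = Sum.inl 1) ∨
    ∃ (i : ι) (s s' : V), G.Adj s s' ∧ p = glueEmb u u' i s ∧ q = glueEmb u u' i s')

lemma glueEmb_of_eq_u {V : Type*} [DecidableEq V] {u u' : V} {ι : Type*} (i : ι) {s : V}
    (h : s = u) : glueEmb u u' i s = Sum.inl 0 := by
  subst h
  exact dif_pos rfl

lemma glueEmb_of_eq_u' {V : Type*} [DecidableEq V] {u u' : V} (huu' : u ≠ u') {ι : Type*}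
    (i : ι) {s : V} (h : s = u') : glueEmb u u' i s = Sum.inl 1 := by
  subst h
  exact (dif_neg (Ne.symm huu')).trans (dif_pos rfl)

lemma glueEmb_of_ne {V : Type*} [DecidableEq V] {u u' : V} {ι : Type*} (i : ι) {s : V}
    (h1 : s ≠ u) (h2 : s ≠ u') : glueEmb u u' i s = Sum.inr (i, ⟨s, h1, h2⟩) :=
  (dif_neg h1).trans (dif_neg h2)

lemma glueEmb_inj {V : Type*} [DecidableEq V] {u u' : V} (huu' : u ≠ u') {ι : Type*}
    (i : ι) : Function.Injective (glueEmb u u' i) := by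
  intro s t h
  by_cases h1 : s = u <;> by_cases h2 : s = u' <;> by_cases h3 : t = u <;> by_cases h4 : t = u' <;>
    first
      | exact absurd (h1.symm.trans h2) huu'
      | exact absurd ((Eq.symm h3).trans h4) huu'
      | exact h1.trans h3.symm
      | exact h2.trans h4.symm
      | (rw [glueEmb_of_eq_u i h1, glueEmb_of_eq_u' huu' i h4] at h
         exact absurd (Sum.inl.inj h) (by decide))
      | (rw [glueEmb_of_eq_u' huu' i h2, glueEmb_of_eq_u i h3] at h
         exact absurd (Sum.inl.inj h) (by decide))
      | (rw [glueEmb_of_eq_u i h1, glueEmb_of_ne i h3 h4] at h; exact absurd h (by simp))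
      | (rw [glueEmb_of_eq_u' huu' i h2, glueEmb_of_ne i h3 h4] at h; exact absurd h (by simp))
      | (rw [glueEmb_of_ne i h1 h2, glueEmb_of_eq_u i h3] at h; exact absurd h (by simp))
      | (rw [glueEmb_of_ne i h1 h2, glueEmb_of_eq_u' huu' i h4] at h; exact absurd h (by simp))
      | (rw [glueEmb_of_ne i h1 h2, glueEmb_of_ne i h3 h4] at h
         exact congrArg (fun p => p.2.1) (Sum.inr.inj h))

/-- Let `a, m` be positive integers and `G` a simple graph with two distinct
nonadjacent vertices `u, u′`. Suppose that for every finite colour set `Z` with `|Z| = a`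
and every pair `A, B` of disjoint `m`-element subsets of `Z`, there exists a list
assignment `L` of `G` with `L(u) = A`, `L(u′) = B` and `|L(s)| = a` for every vertex
`s ∉ {u, u′}`, such that `G` admits no `m`-fold `L`-colouring. Fix a colour set `Z` with
`|Z| = a` and let `H` be the graph obtained from the disjoint union of one copy of `G`
for each ordered pair `(A, B)` of disjoint `m`-element subsets of `Z`, by identifying all
copies of `u`, identifying all copies of `u′`, and adding the edge `uu′`. Then `H` is
not `(a, m)`-choosable. -/
theorem stmt2 {α V : Type*} [DecidableEq α] [DecidableEq V]
    (a m : ℕ) (ha : 1 ≤ a) (hm : 1 ≤ m)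
    (G : SimpleGraph V) (u u' : V) (huu' : u ≠ u') (hnadj : ¬ G.Adj u u')
    (hgadget : ∀ Z : Finset α, Z.card = a →
      ∀ A B : Finset α, A ⊆ Z → B ⊆ Z → A.card = m → B.card = m → Disjoint A B →
        ∃ L : V → Finset α, L u = A ∧ L u' = B ∧
          (∀ s, s ≠ u → s ≠ u' → (L s).card = a) ∧
          ¬ ∃ φ : V → Finset α, IsMFoldColouring G L m φ)
    (Z : Finset α) (hZ : Z.card = a) :
    ∃ L : GlueVert V u u' (PairIdx Z m) → Finset α,
      (∀ s, (L s).card = a) ∧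
      ¬ ∃ φ : GlueVert V u u' (PairIdx Z m) → Finset α,
          IsMFoldColouring (glueGraph G u u' (PairIdx Z m)) L m φ := by
  choose Lg hLu hLu' hLcard hLnocol using fun (i : PairIdx Z m) =>
    hgadget Z hZ i.1.1 i.1.2 i.2.1 i.2.2.1 i.2.2.2.1 i.2.2.2.2.1 i.2.2.2.2.2
  refine ⟨fun p => match p with
    | Sum.inl _ => Z
    | Sum.inr (i, s) => Lg i s.1, ?_, ?_⟩
  · rintro (k | ⟨i, s, hs1, hs2⟩)
    · exact hZ
    · exact hLcard i s hs1 hs2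
  · rintro ⟨φ, hsub, hcard, hdisj⟩
    have hne01 : (Sum.inl 0 : GlueVert V u u' (PairIdx Z m)) ≠ Sum.inl 1 := by
      intro h
      exact (by decide : (0 : Fin 2) ≠ 1) (Sum.inl.inj h)
    have hadj01 : (glueGraph G u u' (PairIdx Z m)).Adj (Sum.inl 0) (Sum.inl 1) := by
      refine (SimpleGraph.fromRel_adj _ _ _).mpr ?_
      exact ⟨hne01, Or.inl (Or.inl ⟨rfl, rfl⟩)⟩
    have hAZ : φ (Sum.inl 0) ⊆ Z := hsub (Sum.inl 0)
    have hBZ : φ (Sum.inl 1) ⊆ Z := hsub (Sum.inl 1)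
    have hABd : Disjoint (φ (Sum.inl 0)) (φ (Sum.inl 1)) := hdisj hadj01
    set i : PairIdx Z m :=
      ⟨(φ (Sum.inl 0), φ (Sum.inl 1)), hAZ, hBZ, hcard _, hcard _, hABd⟩ with hi
    refine hLnocol i ⟨fun s => φ (glueEmb u u' i s), ?_, fun s => hcard _, ?_⟩
    · intro s
      show φ (glueEmb u u' i s) ⊆ Lg i s
      by_cases h1 : s = u
      · rw [glueEmb_of_eq_u i h1, h1, hLu i]
      by_cases h2 : s = u'
      · rw [glueEmb_of_eq_u' huu' i h2, h2, hLu' i]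
      · rw [glueEmb_of_ne i h1 h2]
        exact hsub (Sum.inr (i, ⟨s, h1, h2⟩))
    · intro s s' hss'
      refine hdisj ?_
      refine (SimpleGraph.fromRel_adj _ _ _).mpr ?_
      exact ⟨fun h => hss'.ne (glueEmb_inj huu' i h),
        Or.inl (Or.inr ⟨i, s, s', hss', rfl, rfl⟩)⟩
end

section
/- Let m ≥ 1 and k ≥ 0 be integers. Let C be a finite set with |C| = 2m + k, let V and W be disjoint m-element subsets of C, and let X and X′ be disjoint m-element subsets of C. Then there exist Y ∈ {X, X′} and P ∈ {V, W} such that 4·|Y ∩ P| ≥ 2m − k. -/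
/-- Let `m ≥ 1` and `k ≥ 0` be integers. Let `C` be a finite set with
`|C| = 2m + k`, let `V` and `W` be disjoint `m`-element subsets of `C`, and let `X` and
`X′` be disjoint `m`-element subsets of `C`. Then there exist `Y ∈ {X, X′}` and
`P ∈ {V, W}` such that `4·|Y ∩ P| ≥ 2m − k`. -/
theorem stmt4 {α : Type*} [DecidableEq α] (m k : ℕ) (hm : 1 ≤ m)
    (C V W X X' : Finset α)
    (hC : C.card = 2 * m + k)
    (hV : V ⊆ C) (hW : W ⊆ C) (hVW : Disjoint V W)
    (hVc : V.card = m) (hWc : W.card = m)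
    (hX : X ⊆ C) (hX' : X' ⊆ C) (hXX' : Disjoint X X')
    (hXc : X.card = m) (hX'c : X'.card = m) :
    ∃ Y P : Finset α, (Y = X ∨ Y = X') ∧ (P = V ∨ P = W) ∧
      (4 * (Y ∩ P).card : ℤ) ≥ 2 * (m : ℤ) - (k : ℤ) := by
  set S := C \ (V ∪ W) with hSdef
  have hVWsub : V ∪ W ⊆ C := Finset.union_subset hV hW
  have hS : S.card = k := by
    rw [hSdef, Finset.card_sdiff_of_subset hVWsub, Finset.card_union_of_disjoint hVW, hVc, hWc, hC]
    omega
  have hsum : (X ∩ S).card + (X' ∩ S).card ≤ k := by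
    rw [← hS]
    rw [← Finset.card_union_of_disjoint
      (Finset.disjoint_of_subset_left Finset.inter_subset_left
        (Finset.disjoint_of_subset_right Finset.inter_subset_left hXX'))]
    exact Finset.card_le_card (Finset.union_subset Finset.inter_subset_right
      Finset.inter_subset_right)
  have key : ∀ Y : Finset α, Y ⊆ C → Y.card = m →
      m ≤ (Y ∩ V).card + (Y ∩ W).card + (Y ∩ S).card := by
    intro Y hYC hYc
    have hsub : Y ⊆ (Y ∩ V) ∪ (Y ∩ W) ∪ (Y ∩ S) := by
      intro a ha
      have haC : a ∈ C := hYC ha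
      simp only [Finset.mem_union, Finset.mem_inter, hSdef, Finset.mem_sdiff]
      by_cases h1 : a ∈ V
      · tauto
      · by_cases h2 : a ∈ W <;> tauto
    calc m = Y.card := hYc.symm
      _ ≤ ((Y ∩ V) ∪ (Y ∩ W) ∪ (Y ∩ S)).card := Finset.card_le_card hsub
      _ ≤ ((Y ∩ V) ∪ (Y ∩ W)).card + (Y ∩ S).card := Finset.card_union_le _ _
      _ ≤ (Y ∩ V).card + (Y ∩ W).card + (Y ∩ S).card := by
          exact add_le_add_left (Finset.card_union_le _ _) _
  have hkey1 := key X hX hXc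
  have hkey2 := key X' hX' hX'c
  -- choose Y with 2*(Y∩S).card ≤ k
  rcases le_or_gt (2 * (X ∩ S).card) k with h | h
  · rcases le_total (X ∩ V).card (X ∩ W).card with hp | hp
    · exact ⟨X, W, Or.inl rfl, Or.inr rfl, by push_cast; omega⟩
    · exact ⟨X, V, Or.inl rfl, Or.inl rfl, by push_cast; omega⟩
  · have h' : 2 * (X' ∩ S).card ≤ k := by omega
    rcases le_total (X' ∩ V).card (X' ∩ W).card with hp | hp
    · exact ⟨X', W, Or.inr rfl, Or.inr rfl, by push_cast; omega⟩
    · exact ⟨X', V, Or.inr rfl, Or.inl rfl, by push_cast; omega⟩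
end
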